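/- For m ≥ 1 let J_m denote the m×m unipotent Jordan block over ℂ (entries 1 on the diagonal and on the superdiagonal, 0 elsewhere). Then for all n, p ≥ 1 the Kronecker (tensor) product J_n ⊗ J_p is similar over ℂ to the block-diagonal matrix with diagonal blocks J_s for s ranging over {n+p-1, n+p-3, …, |n-p|+3, |n-p|+1}: there is an invertible complex matrix T (together with a bijection between Fin n × Fin p and the disjoint union of the index sets of the blocks, whose sizes sum to np) with J_n ⊗ J_p = T · (⊕_s J_s) · T⁻¹. -/
import Mathlib


open Matrix Kronecker

open Finset

/-- The `m × m` unipotent Jordan block (ones on the diagonal and the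
superdiagonal). -/
def jordanBlock (m : ℕ) : Matrix (Fin m) (Fin m) ℂ :=
  fun i j => if (j : ℕ) = (i : ℕ) then 1
    else if (j : ℕ) = (i : ℕ) + 1 then 1 else 0

namespace JBP

noncomputable section

abbrev W := ℕ → ℕ → ℂ

/-- raising operator `E` (multiplication by `x+y` in reversed coordinates). -/
def Eo : Module.End ℂ W where
  toFun g := fun a b => g (a+1) b + g a (b+1)
  map_add' x y := by funext a b; simp [Pi.add_apply]; ring
  map_smul' c x := by funext a b; simp [Pi.smul_apply]; ring

/-- lowering operator `F`. -/
def Fo (n p : ℕ) : Module.End ℂ W where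
  toFun g := fun a b =>
    (a : ℂ) * ((n : ℂ) - a) * g (a-1) b + (b : ℂ) * ((p : ℂ) - b) * g a (b-1)
  map_add' x y := by funext a b; simp [Pi.add_apply]; ring
  map_smul' c x := by funext a b; simp [Pi.smul_apply]; ring

/-- weight operator `H`. -/
def Ho (n p : ℕ) : Module.End ℂ W where
  toFun g := fun a b => ((n : ℂ) + p - 2 - 2*a - 2*b) * g a b
  map_add' x y := by funext a b; simp [Pi.add_apply]; ring
  map_smul' c x := by funext a b; simp [Pi.smul_apply]; ring

lemma comm_FE (n p : ℕ) (g : W) :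
    Fo n p (Eo g) = Eo (Fo n p g) - Ho n p g := by
  funext a b
  rcases a with _ | a <;> rcases b with _ | b <;>
    simp [Eo, Fo, Ho, Pi.sub_apply] <;> push_cast <;> ring

/-- coefficients of the singular (lowest-weight) vector. -/
def cc (n p t : ℕ) : ℕ → ℂ
  | 0 => 1
  | (i+1) => (-(((t-i)*(p-t+i) : ℕ) : ℂ) / (((i+1)*(n-1-i) : ℕ) : ℂ)) * cc n p t i

/-- the singular vector of "degree" `t` (supported on the antidiagonal
`a + b = n + p - 2 - t`). -/
def z (n p t : ℕ) : W := fun a b =>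
  if a < n ∧ b < p ∧ a + b = n + p - 2 - t then cc n p t (n-1-a) else 0

lemma Fz (n p t : ℕ) (hn : 1 ≤ n) (hp : 1 ≤ p) (ht : t < min n p) :
    Fo n p (z n p t) = 0 := by
  funext a b
  show (a : ℂ) * ((n : ℂ) - a) * z n p t (a-1) b
      + (b : ℂ) * ((p : ℂ) - b) * z n p t a (b-1) = (0 : ℂ)
  by_cases h1 : a - 1 < n ∧ b < p ∧ (a-1) + b = n + p - 2 - t
  · by_cases h2 : a < n ∧ b - 1 < p ∧ a + (b-1) = n + p - 2 - t
    · -- main case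
      by_cases ha : a = 0
      · subst ha
        have hb : b = 0 := by omega
        subst hb
        simp
      · by_cases hb : b = 0
        · exact absurd rfl (by omega : ¬ (0 = 0))
        · obtain ⟨A, rfl⟩ : ∃ A, a = A + 1 := ⟨a - 1, by omega⟩
          obtain ⟨B, rfl⟩ : ∃ B, b = B + 1 := ⟨b - 1, by omega⟩
          have hAn : A + 1 < n := h2.1
          have hBp : B + 1 < p := h1.2.1
          rw [z, z, if_pos (by simpa using h1), if_pos (by simpa using h2)]
          have hi1 : n - 1 - (A+1-1) = (n - 2 - A) + 1 := by omega
          have hi2 : n - 1 - (A+1) = n - 2 - A := by omega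
          rw [hi1, hi2, cc]
          have hX : (t - (n-2-A)) * (p - t + (n-2-A)) = (p-1-B)*(B+1) := by
            rw [show t - (n-2-A) = p-1-B by omega, show p - t + (n-2-A) = B+1 by omega]
          have hY : ((n-2-A)+1)*(n-1-(n-2-A)) = (n-1-A)*(A+1) := by
            rw [show (n-2-A)+1 = n-1-A by omega, show n-1-(n-2-A) = A+1 by omega]
          rw [hX, hY]
          have hYne : (((n-1-A)*(A+1) : ℕ) : ℂ) ≠ 0 := by
            rw [Nat.cast_ne_zero]
            have : 1 ≤ n - 1 - A := by omega
            positivity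
          have e1 : ((n : ℂ) - (↑(A+1))) = ((n - 1 - A : ℕ) : ℂ) := by
            rw [show n - 1 - A = n - (A+1) by omega, Nat.cast_sub (by omega)]
          have e2 : ((p : ℂ) - (↑(B+1))) = ((p - 1 - B : ℕ) : ℂ) := by
            rw [show p - 1 - B = p - (B+1) by omega, Nat.cast_sub (by omega)]
          rw [e1, e2]
          set u := cc n p t (n - 2 - A) with hu
          have hcol : (↑(A+1) : ℂ) * ↑(n-1-A) = (((n-1-A)*(A+1) : ℕ) : ℂ) := by
            push_cast; ring
          rw [hcol]
          have hstep : ((((n-1-A)*(A+1) : ℕ) : ℂ)) *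
              (-(((p-1-B)*(B+1) : ℕ) : ℂ) / (((n-1-A)*(A+1) : ℕ) : ℂ) * u)
              = -(((p-1-B)*(B+1) : ℕ) : ℂ) * u := by
            rw [← mul_assoc, mul_comm ((((n-1-A)*(A+1) : ℕ) : ℂ)), div_mul_cancel₀ _ hYne]
          rw [hstep]
          push_cast
          ring
    · -- only first term can be nonzero; its coefficient vanishes
      rw [z, z, if_neg h2]
      have key : a = 0 ∨ a = n := by omega
      rcases key with rfl | rfl
      · simp
      · simp
  · by_cases h2 : a < n ∧ b - 1 < p ∧ a + (b-1) = n + p - 2 - t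
    · rw [z, z, if_neg h1]
      have key : b = 0 ∨ b = p := by omega
      rcases key with rfl | rfl
      · simp
      · simp
    · rw [z, z, if_neg h1, if_neg h2]
      ring

lemma z_supp (n p t : ℕ) (ht : t < min n p) (hn : 1 ≤ n) (hp : 1 ≤ p) :
    ∀ a b, z n p t a b ≠ 0 → a + b + t = n + p - 2 ∧ a < n ∧ b < p := by
  intro a b h
  rw [z] at h
  by_cases hc : a < n ∧ b < p ∧ a + b = n + p - 2 - t
  · omega
  · rw [if_neg hc] at h; exact absurd rfl h

lemma Ek_supp (n p t : ℕ) (ht : t < min n p) (hn : 1 ≤ n) (hp : 1 ≤ p) :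
    ∀ j a b, ((Eo^j) (z n p t)) a b ≠ 0 → a + b + j + t = n + p - 2 ∧ a < n ∧ b < p := by
  intro j
  induction j with
  | zero => intro a b h; simpa using z_supp n p t ht hn hp a b (by simpa using h)
  | succ j ih =>
    intro a b h
    rw [pow_succ', Module.End.mul_apply] at h
    have h' : ((Eo^j) (z n p t)) (a+1) b ≠ 0 ∨ ((Eo^j) (z n p t)) a (b+1) ≠ 0 := by
      by_contra hcon
      push_neg at hcon
      apply h
      show ((Eo^j) (z n p t)) (a+1) b + ((Eo^j) (z n p t)) a (b+1) = 0
      rw [hcon.1, hcon.2, add_zero]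
    rcases h' with h' | h'
    · have := ih _ _ h'; omega
    · have := ih _ _ h'; omega

lemma Ek_zero (n p t : ℕ) (ht : t < min n p) (hn : 1 ≤ n) (hp : 1 ≤ p)
    {j : ℕ} (hj : n + p - 2 < j + t) : (Eo^j) (z n p t) = 0 := by
  funext a b
  by_contra h
  have := Ek_supp n p t ht hn hp j a b h
  omega

lemma Ho_deg (n p t j : ℕ) (ht : t < min n p) (hn : 1 ≤ n) (hp : 1 ≤ p) :
    Ho n p ((Eo^j) (z n p t)) =
      ((2*(j:ℂ) + 2*(t:ℂ) - (n:ℂ) - (p:ℂ) + 2)) • ((Eo^j) (z n p t)) := by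
  funext a b
  show ((n : ℂ) + p - 2 - 2*a - 2*b) * ((Eo^j) (z n p t)) a b
      = (2*(j:ℂ) + 2*(t:ℂ) - (n:ℂ) - (p:ℂ) + 2) * ((Eo^j) (z n p t)) a b
  by_cases h : ((Eo^j) (z n p t)) a b = 0
  · rw [h, mul_zero, mul_zero]
  · have hs := (Ek_supp n p t ht hn hp j a b h).1
    have hc : (a : ℂ) + b + j + t = (n:ℂ) + p - 2 := by
      have h2 : ((a + b + j + t : ℕ) : ℂ) = ((n + p - 2 : ℕ) : ℂ) := by rw [hs]
      have h3 : ((n + p - 2 : ℕ) : ℂ) = (n : ℂ) + p - 2 := by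
        have : n + p - 2 + 2 = n + p := by omega
        calc ((n + p - 2 : ℕ) : ℂ) = ((n + p : ℕ) : ℂ) - 2 := by
              rw [← this]; push_cast; ring
          _ = (n : ℂ) + p - 2 := by push_cast; ring
      push_cast at h2
      linear_combination h2.trans h3
    have heq : ((n : ℂ) + p - 2 - 2*a - 2*b) = (2*(j:ℂ) + 2*(t:ℂ) - (n:ℂ) - (p:ℂ) + 2) := by
      linear_combination (-2 : ℂ) * hc
    rw [heq]

lemma chainF (n p t : ℕ) (hn : 1 ≤ n) (hp : 1 ≤ p) (ht : t < min n p) :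
    ∀ j : ℕ, Fo n p ((Eo^(j+1)) (z n p t)) =
      (((j:ℂ)+1) * (((n:ℂ)+(p:ℂ)-1-2*(t:ℂ)) - ((j:ℂ)+1))) • ((Eo^j) (z n p t)) := by
  intro j
  induction j with
  | zero =>
    simp only [zero_add, pow_one, pow_zero, Module.End.one_apply]
    have h1 : Fo n p (Eo (z n p t)) = Eo (Fo n p (z n p t)) - Ho n p (z n p t) :=
      comm_FE n p (z n p t)
    rw [Fz n p t hn hp ht, map_zero, zero_sub] at h1
    have h2 := Ho_deg n p t 0 ht hn hp
    simp only [pow_zero, Module.End.one_apply] at h2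
    rw [h1, h2, ← neg_smul]
    congr 1
    push_cast
    ring
  | succ j ih =>
    have hps : (Eo^(j+1+1)) (z n p t) = Eo ((Eo^(j+1)) (z n p t)) := by
      rw [pow_succ', Module.End.mul_apply]
    rw [hps, comm_FE, ih, _root_.map_smul, Ho_deg n p t (j+1) ht hn hp,
      show Eo ((Eo^j) (z n p t)) = (Eo^(j+1)) (z n p t) by rw [pow_succ', Module.End.mul_apply],
      ← sub_smul]
    congr 1
    push_cast
    ring

lemma Ekill (n p t : ℕ) (hn : 1 ≤ n) (hp : 1 ≤ p) (ht : t < min n p) :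
    (Eo^(n+p-1-2*t)) (z n p t) = 0 := by
  set L := n + p - 1 - 2*t with hL
  have hlc : ((n:ℂ)+(p:ℂ)-1-2*(t:ℂ)) = ((L : ℕ) : ℂ) := by
    have h1 : L + (2*t+1) = n + p := by omega
    have h2 := congrArg (Nat.cast : ℕ → ℂ) h1
    push_cast at h2
    linear_combination - h2
  have key : ∀ i, i ≤ t+1 → (Eo^(L + (t+1-i))) (z n p t) = 0 := by
    intro i
    induction i with
    | zero => intro _; exact Ek_zero n p t ht hn hp (by omega)
    | succ i ih =>
      intro hi
      have h0 := ih (by omega)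
      have hexp : L + (t+1-i) = (L + (t - i)) + 1 := by omega
      rw [hexp] at h0
      have hch := chainF n p t hn hp ht (L + (t - i))
      rw [h0, map_zero] at hch
      have hcne : (((L + (t-i) : ℕ) : ℂ)+1) *
          (((n:ℂ)+(p:ℂ)-1-2*(t:ℂ)) - (((L + (t-i) : ℕ) : ℂ)+1)) ≠ 0 := by
        apply mul_ne_zero
        · have : ((L + (t-i) : ℕ) : ℂ) + 1 = ((L + (t-i) + 1 : ℕ) : ℂ) := by push_cast; ring
          rw [this]
          exact Nat.cast_ne_zero.mpr (by omega)
        · rw [hlc]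
          have : ((L : ℕ) : ℂ) - (((L + (t-i) : ℕ) : ℂ)+1) = -(((t-i) + 1 : ℕ) : ℂ) := by
            push_cast; ring
          rw [this]
          exact neg_ne_zero.mpr (Nat.cast_ne_zero.mpr (by omega))
      have := (smul_eq_zero.mp hch.symm).resolve_left hcne
      have hexp2 : L + (t+1-(i+1)) = L + (t - i) := by omega
      rw [hexp2]
      exact this
  have := key (t+1) le_rfl
  simpa using this

lemma chainF' (n p t : ℕ) (hn : 1 ≤ n) (hp : 1 ≤ p) (ht : t < min n p)
    {k : ℕ} (hk : 1 ≤ k) :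
    Fo n p ((Eo^k) (z n p t)) =
      ((k:ℂ) * (((n:ℂ)+(p:ℂ)-1-2*(t:ℂ)) - (k:ℂ))) • ((Eo^(k-1)) (z n p t)) := by
  obtain ⟨j, rfl⟩ : ∃ j, k = j + 1 := ⟨k-1, by omega⟩
  have h := chainF n p t hn hp ht j
  rw [h, Nat.add_sub_cancel]
  congr 1
  push_cast
  ring

lemma FpowChain (n p t : ℕ) (hn : 1 ≤ n) (hp : 1 ≤ p) (ht : t < min n p) :
    ∀ K k : ℕ, K ≤ k → k ≤ n+p-2-2*t →
    ∃ κ : ℂ, κ ≠ 0 ∧ (Fo n p ^ K) ((Eo^k) (z n p t)) = κ • ((Eo^(k-K)) (z n p t)) := by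
  intro K
  induction K with
  | zero => intro k _ _; exact ⟨1, one_ne_zero, by simp⟩
  | succ K ih =>
    intro k hK hk
    have hk1 : 1 ≤ k := by omega
    have hch := chainF' n p t hn hp ht hk1
    obtain ⟨κ, hκ, hiter⟩ := ih (k-1) (by omega) (by omega)
    refine ⟨(k:ℂ) * (((n:ℂ)+(p:ℂ)-1-2*(t:ℂ)) - (k:ℂ)) * κ, ?_, ?_⟩
    · apply mul_ne_zero (mul_ne_zero ?_ ?_) hκ
      · exact Nat.cast_ne_zero.mpr (by omega)
      · have hlk : ((n:ℂ)+(p:ℂ)-1-2*(t:ℂ)) - (k:ℂ) = ((n+p-1-2*t-k : ℕ) : ℂ) := by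
          have h1 : (n+p-1-2*t-k) + (k + (2*t+1)) = n + p := by omega
          have h2 := congrArg (Nat.cast : ℕ → ℂ) h1
          push_cast at h2
          linear_combination - h2
        rw [hlk]
        exact Nat.cast_ne_zero.mpr (by omega)
    · have hpow : (Fo n p ^ (K+1)) ((Eo^k) (z n p t))
          = (Fo n p ^ K) (Fo n p ((Eo^k) (z n p t))) := by
        rw [pow_succ, Module.End.mul_apply]
      rw [hpow, hch, _root_.map_smul, hiter, smul_smul]
      have : k - 1 - K = k - (K+1) := by omega
      rw [this]

lemma FpowKill (n p t : ℕ) (hn : 1 ≤ n) (hp : 1 ≤ p) (ht : t < min n p) :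
    ∀ K k : ℕ, k < K → k ≤ n+p-2-2*t →
    (Fo n p ^ K) ((Eo^k) (z n p t)) = 0 := by
  intro K k hK hk
  obtain ⟨r, rfl⟩ : ∃ r, K = r + (k+1) := ⟨K - (k+1), by omega⟩
  rw [pow_add, Module.End.mul_apply]
  have h1 : (Fo n p ^ (k+1)) ((Eo^k) (z n p t)) = 0 := by
    obtain ⟨κ, hκ, hiter⟩ := FpowChain n p t hn hp ht k k le_rfl hk
    rw [pow_succ', Module.End.mul_apply, hiter, _root_.map_smul, Nat.sub_self, pow_zero,
      Module.End.one_apply, Fz n p t hn hp ht, smul_zero]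
  rw [h1, map_zero]

/-! ### index bookkeeping -/

def Lst (n p t : ℕ) : ℕ := max n p - min n p + 1 + 2*t

abbrev Idx (n p : ℕ) := Σ t : Fin (min n p), Fin (Lst n p t)

def tops (n p : ℕ) (σ : Idx n p) : ℕ := min n p - 1 - (σ.1 : ℕ)

def kexp (n p : ℕ) (σ : Idx n p) : ℕ := Lst n p σ.1 - 1 - (σ.2 : ℕ)

def chainW (n p : ℕ) (σ : Idx n p) : W := (Eo ^ (kexp n p σ)) (z n p (tops n p σ))

lemma tops_lt (n p : ℕ) (hn : 1 ≤ n) (hp : 1 ≤ p) (σ : Idx n p) :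
    tops n p σ < min n p := by
  have := σ.1.2
  unfold tops
  omega

lemma kexp_le (n p : ℕ) (σ : Idx n p) : kexp n p σ ≤ n + p - 2 - 2 * tops n p σ := by
  have h1 := σ.1.2
  have h2 := σ.2.2
  unfold kexp tops Lst at *
  omega

lemma idx_unique (n p : ℕ) (σ σ' : Idx n p)
    (h1 : tops n p σ = tops n p σ') (h2 : kexp n p σ = kexp n p σ') : σ = σ' := by
  have ha := σ.1.2
  have hb := σ'.1.2
  have hc := σ.2.2
  have hd := σ'.2.2
  unfold tops kexp Lst at *
  have hfst : (σ.1 : ℕ) = (σ'.1 : ℕ) := by omega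
  rcases σ with ⟨⟨s1, hs1⟩, ⟨s2, hs2⟩⟩
  rcases σ' with ⟨⟨s1', hs1'⟩, ⟨s2', hs2'⟩⟩
  simp only at hfst
  subst hfst
  simp only [Sigma.mk.inj_iff, heq_eq_eq, Fin.mk.injEq]
  refine ⟨trivial, ?_⟩
  simp only at h2 hc hd ⊢
  omega

lemma chain_supp (n p : ℕ) (hn : 1 ≤ n) (hp : 1 ≤ p) (σ : Idx n p) :
    ∀ a b, chainW n p σ a b ≠ 0 →
      a + b + kexp n p σ + tops n p σ = n + p - 2 ∧ a < n ∧ b < p := by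
  intro a b h
  exact Ek_supp n p (tops n p σ) (tops_lt n p hn hp σ) hn hp (kexp n p σ) a b h

/-! ### linear independence of the chain vectors -/

lemma indep (n p : ℕ) (hn : 1 ≤ n) (hp : 1 ≤ p) (v : Idx n p → ℂ)
    (hv : ∑ σ : Idx n p, v σ • chainW n p σ = (0 : W)) : ∀ σ, v σ = 0 := by
  suffices key : ∀ T : ℕ, ∀ σ, tops n p σ = T → v σ = 0 by
    intro σ; exact key _ σ rfl
  intro T
  induction T using Nat.strong_induction_on with
  | _ T ih =>
  intro σ hσ
  have hT : T < min n p := hσ ▸ tops_lt n p hn hp σ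
  set q := T + kexp n p σ with hq
  have hqle : q ≤ n + p - 2 := by
    have := kexp_le n p σ
    omega
  set cls : Finset (Idx n p) :=
    Finset.univ.filter (fun σ' => tops n p σ' + kexp n p σ' = q) with hcls
  -- Step A : the partial sum over the degree class of σ vanishes
  have hGq : ∑ σ' ∈ cls, v σ' • chainW n p σ' = (0 : W) := by
    funext a b
    have heval : ∀ (s : Finset (Idx n p)),
        (∑ σ' ∈ s, v σ' • chainW n p σ') a b = ∑ σ' ∈ s, v σ' * chainW n p σ' a b := by
      intro s
      rw [Finset.sum_apply, Finset.sum_apply]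
      rfl
    show (∑ σ' ∈ cls, v σ' • chainW n p σ') a b = 0
    rw [heval]
    by_cases hab : a + b + q = n + p - 2
    · -- terms outside the class vanish at (a,b)
      have hsplit := Finset.sum_filter_add_sum_filter_not Finset.univ
        (fun σ' => tops n p σ' + kexp n p σ' = q) (fun σ' => v σ' * chainW n p σ' a b)
      have hzero2 : ∑ σ' ∈ Finset.univ.filter
          (fun σ' => ¬ (tops n p σ' + kexp n p σ' = q)), v σ' * chainW n p σ' a b = 0 := by
        apply Finset.sum_eq_zero
        intro σ' hσ'
        rw [Finset.mem_filter] at hσ'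
        by_cases hz : chainW n p σ' a b = 0
        · rw [hz, mul_zero]
        · exfalso
          have := chain_supp n p hn hp σ' a b hz
          exact hσ'.2 (by omega)
      have htot : ∑ σ' : Idx n p, v σ' * chainW n p σ' a b = 0 := by
        have := congrFun (congrFun hv a) b
        rw [heval Finset.univ] at this
        exact this
      rw [← hcls] at hsplit
      rw [hzero2, add_zero] at hsplit
      rw [hsplit]
      exact htot
    · apply Finset.sum_eq_zero
      intro σ' hσ'
      rw [hcls, Finset.mem_filter] at hσ'
      by_cases hz : chainW n p σ' a b = 0
      · rw [hz, mul_zero]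
      · exfalso
        have := chain_supp n p hn hp σ' a b hz
        exact hab (by omega)
  -- Step B : apply F^(q-T)
  have hFG : ∑ σ' ∈ cls, v σ' • (Fo n p ^ (q - T)) (chainW n p σ') = (0 : W) := by
    have h1 := congrArg (fun g => (Fo n p ^ (q - T)) g) hGq
    simp only [map_zero] at h1
    rw [map_sum] at h1
    simpa only [_root_.map_smul] using h1
  obtain ⟨κ, hκ, hiter⟩ := FpowChain n p T hn hp hT (q - T) (kexp n p σ)
    (by omega) (by have := kexp_le n p σ; omega)
  have hsingle : ∑ σ' ∈ cls, v σ' • (Fo n p ^ (q - T)) (chainW n p σ')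
      = v σ • (κ • z n p T) := by
    rw [Finset.sum_eq_single σ]
    · unfold chainW
      rw [hσ]
      have hkq : kexp n p σ = q - T := by omega
      rw [hkq] at hiter ⊢
      rw [hiter, Nat.sub_self, pow_zero, Module.End.one_apply]
    · intro σ' hσ' hne
      rw [hcls, Finset.mem_filter] at hσ'
      rcases Nat.lt_trichotomy (tops n p σ') T with hlt | heq | hgt
      · rw [ih _ hlt σ' rfl, zero_smul]
      · exfalso
        apply hne
        apply idx_unique n p σ' σ (by rw [heq, hσ])
        omega
      · unfold chainW
        rw [FpowKill n p (tops n p σ') hn hp (tops_lt n p hn hp σ') (q - T) (kexp n p σ')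
          (by omega) (kexp_le n p σ'), smul_zero]
    · intro hnotin
      exfalso
      apply hnotin
      rw [hcls, Finset.mem_filter]
      exact ⟨Finset.mem_univ σ, by omega⟩
  rw [hFG] at hsingle
  -- Step C : evaluate at the witness point
  have hwit : z n p T (n-1) (p-1-T) = 1 := by
    rw [z, if_pos (by omega : n-1 < n ∧ p-1-T < p ∧ (n-1) + (p-1-T) = n + p - 2 - T)]
    rw [show n - 1 - (n-1) = 0 by omega]
    rfl
  have := congrFun (congrFun hsingle.symm (n-1)) (p-1-T)
  show v σ = 0
  have heval : v σ * (κ * z n p T (n-1) (p-1-T)) = 0 := this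
  rw [hwit, mul_one] at heval
  rcases mul_eq_zero.mp heval with h | h
  · exact h
  · exact absurd h hκ

/-! ### boxes, vectors and the transfer matrix -/

def BoxSupp (n p : ℕ) (g : W) : Prop := ∀ a b, (n ≤ a ∨ p ≤ b) → g a b = 0

def vecc (n p : ℕ) (g : W) : Fin n × Fin p → ℂ := fun r => g r.1 r.2

lemma chain_box (n p : ℕ) (hn : 1 ≤ n) (hp : 1 ≤ p) (σ : Idx n p) :
    BoxSupp n p (chainW n p σ) := by
  intro a b hab
  by_contra h
  have := chain_supp n p hn hp σ a b h
  omega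

/-- the (matrix of the) ring automorphism `y ↦ y(1+x)` of `ℂ[x,y]/(xⁿ,yᵖ)`,
conjugating multiplication by `x+y` into multiplication by `x+y+xy`. -/
def phiW (n p : ℕ) (g : W) : W := fun a b =>
  ∑ i ∈ Finset.range n, (if a ≤ i then ((p-1-b).choose (i-a) : ℂ) * g i b else 0)

lemma phiW_box (n p : ℕ) (g : W) (hg : BoxSupp n p g) : BoxSupp n p (phiW n p g) := by
  intro a b hab
  apply Finset.sum_eq_zero
  intro i hi
  rw [Finset.mem_range] at hi
  rcases hab with ha | hb
  · rw [if_neg (by omega)]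
  · split_ifs
    · rw [hg i b (Or.inr hb), mul_zero]
    · rfl

lemma phiW_zero (n p : ℕ) : phiW n p (0 : W) = 0 := by
  funext a b
  apply Finset.sum_eq_zero
  intro i _
  split_ifs
  · show _ * (0:ℂ) = 0; rw [mul_zero]
  · rfl

/-- `φ` is injective on box-supported functions. -/
lemma phiW_inj (n p : ℕ) (g : W) (hg : BoxSupp n p g)
    (h : ∀ a b, a < n → b < p → phiW n p g a b = 0) : g = 0 := by
  have key : ∀ k a b, a < n → b < p → n - a ≤ k + 1 → g a b = 0 := by
    intro k
    induction k with
    | zero =>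
      intro a b ha hb hk
      have ha' : a = n - 1 := by omega
      have := h a b ha hb
      rw [phiW] at this
      rw [Finset.sum_eq_single a] at this
      · rw [if_pos le_rfl, Nat.sub_self, Nat.choose_zero_right] at this
        simpa using this
      · intro i hi hne
        rw [Finset.mem_range] at hi
        rw [if_neg (by omega)]
      · intro hna
        exact absurd (Finset.mem_range.mpr ha) hna
    | succ k ih =>
      intro a b ha hb hk
      have := h a b ha hb
      rw [phiW] at this
      rw [Finset.sum_eq_single a] at this
      · rw [if_pos le_rfl, Nat.sub_self, Nat.choose_zero_right] at this
        simpa using this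
      · intro i hi hne
        rw [Finset.mem_range] at hi
        by_cases hai : a ≤ i
        · rw [if_pos hai, ih i b hi hb (by omega), mul_zero]
        · rw [if_neg hai]
      · intro hna
        exact absurd (Finset.mem_range.mpr ha) hna
  funext a b
  show g a b = 0
  by_cases hbox : a < n ∧ b < p
  · exact key (n - a) a b hbox.1 hbox.2 (by omega)
  · exact hg a b (by omega)

/-! ### basic matrix building blocks -/

lemma jb_entry (m : ℕ) (i j : Fin m) :
    jordanBlock m i j = (if (j:ℕ) = (i:ℕ) then (1:ℂ) else 0)
      + (if (j:ℕ) = (i:ℕ)+1 then (1:ℂ) else 0) := by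
  unfold jordanBlock
  split_ifs with h1 h2 <;> first | omega | norm_num

/-- summing a row of the Jordan block against a (box supported) ℕ-indexed
vector. -/
lemma jb_row_sum (m : ℕ) (i : Fin m) (u : ℕ → ℂ) (hu : ∀ a, m ≤ a → u a = 0) :
    ∑ i' : Fin m, jordanBlock m i i' * u i' = u i + u ((i:ℕ)+1) := by
  have h1 : ∀ i' : Fin m, jordanBlock m i i' * u i'
      = (if (i':ℕ) = (i:ℕ) then u i' else 0) + (if (i':ℕ) = (i:ℕ)+1 then u i' else 0) := by
    intro i'
    rw [jb_entry]
    split_ifs with h1 h2 <;> ring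
  rw [Finset.sum_congr rfl (fun i' _ => h1 i'), Finset.sum_add_distrib]
  have e1 : ∑ i' : Fin m, (if (i':ℕ) = (i:ℕ) then u i' else 0) = u i := by
    rw [Fin.sum_univ_eq_sum_range (fun a => if a = (i:ℕ) then u a else 0) m]
    rw [Finset.sum_ite_eq' (Finset.range m) (i:ℕ) u]
    rw [if_pos (Finset.mem_range.mpr i.2)]
  have e2 : ∑ i' : Fin m, (if (i':ℕ) = (i:ℕ)+1 then u i' else 0) = u ((i:ℕ)+1) := by
    rw [Fin.sum_univ_eq_sum_range (fun a => if a = (i:ℕ)+1 then u a else 0) m]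
    rw [Finset.sum_ite_eq' (Finset.range m) ((i:ℕ)+1) u]
    by_cases hm : (i:ℕ)+1 < m
    · rw [if_pos (Finset.mem_range.mpr hm)]
    · rw [if_neg (fun hc => hm (Finset.mem_range.mp hc)), hu _ (by omega)]
  rw [e1, e2]

/-- summing a column of the Jordan block against a `Fin`-indexed vector. -/
lemma jb_col_sum (m : ℕ) (j : Fin m) (u : Fin m → ℂ) :
    ∑ i : Fin m, u i * jordanBlock m i j
      = u j + (if h : 1 ≤ (j:ℕ) then u ⟨(j:ℕ)-1, by omega⟩ else 0) := by
  have h1 : ∀ i : Fin m, u i * jordanBlock m i j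
      = (if (j:ℕ) = (i:ℕ) then u i else 0)
        + (if (j:ℕ) = (i:ℕ)+1 then u i else 0) := by
    intro i
    rw [jb_entry]
    split_ifs <;> ring
  rw [Finset.sum_congr rfl (fun i _ => h1 i), Finset.sum_add_distrib]
  congr 1
  · rw [Finset.sum_eq_single j]
    · rw [if_pos rfl]
    · intro i _ hne
      rw [if_neg (fun hc => hne (Fin.ext hc.symm))]
    · intro hni
      exact absurd (Finset.mem_univ _) hni
  · by_cases hj : 1 ≤ (j:ℕ)
    · rw [dif_pos hj]
      rw [Finset.sum_eq_single (⟨(j:ℕ)-1, by omega⟩ : Fin m)]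
      · rw [if_pos (by simp; omega)]
      · intro i _ hne
        rw [if_neg ?_]
        intro hc
        apply hne
        apply Fin.ext
        simp only
        omega
      · intro hni
        exact absurd (Finset.mem_univ _) hni
    · rw [dif_neg hj]
      apply Finset.sum_eq_zero
      intro i _
      rw [if_neg (by omega)]

/-- the matrix of the Kronecker product acts on box-supported functions as
multiplication by `(1+x)(1+y)`. -/
lemma A_mulVec (n p : ℕ) (g : W) (hg : BoxSupp n p g) :
    (Matrix.kroneckerMap (· * ·) (jordanBlock n) (jordanBlock p)).mulVec (vecc n p g)
      = vecc n p (fun a b => g a b + g (a+1) b + g a (b+1) + g (a+1) (b+1)) := by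
  funext r
  obtain ⟨i, j⟩ := r
  show ∑ c : Fin n × Fin p,
      (jordanBlock n i c.1 * jordanBlock p j c.2) * vecc n p g c = _
  rw [Fintype.sum_prod_type]
  have hinner : ∀ c1 : Fin n, ∑ c2 : Fin p,
      (jordanBlock n i c1 * jordanBlock p j c2) * vecc n p g (c1, c2)
      = jordanBlock n i c1 * (g c1 j + g c1 ((j:ℕ)+1)) := by
    intro c1
    rw [← jb_row_sum p j (fun b => g c1 b) (fun b hb => hg c1 b (Or.inr hb))]
    rw [Finset.mul_sum]
    apply Finset.sum_congr rfl
    intro c2 _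
    show (jordanBlock n i c1 * jordanBlock p j c2) * g c1 c2 = _
    ring
  rw [Finset.sum_congr rfl (fun c1 _ => hinner c1)]
  rw [jb_row_sum n i (fun a => g a j + g a ((j:ℕ)+1))
    (fun a ha => by
      show g a (j:ℕ) + g a ((j:ℕ)+1) = 0
      rw [hg a j (Or.inl ha), hg a ((j:ℕ)+1) (Or.inl ha), add_zero])]
  show _ = g i j + g ((i:ℕ)+1) j + g i ((j:ℕ)+1) + g ((i:ℕ)+1) ((j:ℕ)+1)
  ring

/-! ### the matrix of `φ` -/

def Tphi (n p : ℕ) : Matrix (Fin n × Fin p) (Fin n × Fin p) ℂ := fun r c =>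
  if (r.2 : ℕ) = (c.2 : ℕ) ∧ (r.1 : ℕ) ≤ (c.1 : ℕ)
  then ((p-1-(r.2:ℕ)).choose ((c.1:ℕ) - (r.1:ℕ)) : ℂ) else 0

lemma Tphi_mulVec (n p : ℕ) (g : W) (hg : BoxSupp n p g) :
    (Tphi n p).mulVec (vecc n p g) = vecc n p (phiW n p g) := by
  funext r
  obtain ⟨a, b⟩ := r
  show ∑ c : Fin n × Fin p, Tphi n p (a,b) c * vecc n p g c = phiW n p g a b
  rw [Fintype.sum_prod_type]
  have hinner : ∀ i : Fin n, ∑ β : Fin p, Tphi n p (a,b) (i,β) * vecc n p g (i,β)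
      = (if (a:ℕ) ≤ (i:ℕ)
          then ((p-1-(b:ℕ)).choose ((i:ℕ)-(a:ℕ)) : ℂ) * g (i:ℕ) (b:ℕ) else 0) := by
    intro i
    rw [Finset.sum_eq_single b]
    · show (if ((b:ℕ) = (b:ℕ) ∧ (a:ℕ) ≤ (i:ℕ))
          then (((p-1-(b:ℕ)).choose ((i:ℕ)-(a:ℕ)) : ℂ)) else 0) * g (i:ℕ) (b:ℕ) = _
      by_cases hai : (a:ℕ) ≤ (i:ℕ)
      · rw [if_pos ⟨rfl, hai⟩, if_pos hai]
      · rw [if_neg (fun hc => hai hc.2), if_neg hai, zero_mul]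
    · intro β _ hne
      show (if ((b:ℕ) = (β:ℕ) ∧ (a:ℕ) ≤ (i:ℕ)) then _ else 0) * g (i:ℕ) (β:ℕ) = 0
      rw [if_neg (fun hc => hne (Fin.ext hc.1.symm)), zero_mul]
    · intro hb
      exact absurd (Finset.mem_univ b) hb
  rw [Finset.sum_congr rfl (fun i _ => hinner i)]
  rw [phiW, ← Fin.sum_univ_eq_sum_range
    (fun a' => if (a:ℕ) ≤ a' then ((p-1-(b:ℕ)).choose (a'-(a:ℕ)) : ℂ) * g a' (b:ℕ) else 0) n]

lemma Tphi_inj (n p : ℕ) (u : Fin n × Fin p → ℂ)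
    (h : (Tphi n p).mulVec u = 0) : u = 0 := by
  classical
  set g : W := fun a b => if hb : a < n ∧ b < p then u (⟨a, hb.1⟩, ⟨b, hb.2⟩) else 0
    with hgdef
  have hbox : BoxSupp n p g := by
    intro a b hab
    show (if hb : a < n ∧ b < p then u (⟨a, hb.1⟩, ⟨b, hb.2⟩) else 0) = 0
    rw [dif_neg (by omega)]
  have hvec : vecc n p g = u := by
    funext r
    obtain ⟨i, j⟩ := r
    show (if hb : (i:ℕ) < n ∧ (j:ℕ) < p then u (⟨(i:ℕ), hb.1⟩, ⟨(j:ℕ), hb.2⟩) else 0)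
        = u (i,j)
    rw [dif_pos ⟨i.2, j.2⟩]
  have h2 : vecc n p (phiW n p g) = 0 := by
    rw [← Tphi_mulVec n p g hbox, hvec, h]
  have h3 : g = 0 := by
    apply phiW_inj n p g hbox
    intro a b ha hb
    exact congrFun h2 (⟨a, ha⟩, ⟨b, hb⟩)
  rw [← hvec]
  funext r
  show g (r.1:ℕ) (r.2:ℕ) = 0
  rw [h3]
  rfl

/-! ### the intertwining identity -/

lemma intertwine (n p : ℕ) (g : W) (hg : BoxSupp n p g) (a b : ℕ)
    (ha : a < n) (hb : b < p) :
    phiW n p g (a+1) b + phiW n p g a (b+1) + phiW n p g (a+1) (b+1)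
      = phiW n p (Eo g) a b := by
  have hRHS : phiW n p (Eo g) a b
      = (∑ i ∈ Finset.range n,
          (if a ≤ i then ((p-1-b).choose (i-a) : ℂ) * g (i+1) b else 0))
      + (∑ i ∈ Finset.range n,
          (if a ≤ i then ((p-1-b).choose (i-a) : ℂ) * g i (b+1) else 0)) := by
    rw [phiW, ← Finset.sum_add_distrib]
    apply Finset.sum_congr rfl
    intro i _
    show (if a ≤ i then ((p-1-b).choose (i-a) : ℂ) * (g (i+1) b + g i (b+1)) else 0) = _
    split_ifs with h
    · ring
    · norm_num
  have hx : ∑ i ∈ Finset.range n,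
      (if a ≤ i then ((p-1-b).choose (i-a) : ℂ) * g (i+1) b else 0)
      = phiW n p g (a+1) b := by
    rw [phiW]
    set F : ℕ → ℂ := fun j =>
      if a+1 ≤ j then ((p-1-b).choose (j-(a+1)) : ℂ) * g j b else 0 with hF
    have h1 : ∀ i, (if a ≤ i then ((p-1-b).choose (i-a) : ℂ) * g (i+1) b else 0)
        = F (i+1) := by
      intro i
      rw [hF]
      beta_reduce
      by_cases h : a ≤ i
      · rw [if_pos h, if_pos (by omega : a+1 ≤ i+1), show i+1-(a+1) = i-a by omega]
      · rw [if_neg h, if_neg (by omega : ¬ a+1 ≤ i+1)]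
    rw [Finset.sum_congr rfl (fun i _ => h1 i)]
    have h2 : ∑ i ∈ Finset.range (n+1), F i = (∑ i ∈ Finset.range n, F (i+1)) + F 0 :=
      Finset.sum_range_succ' F n
    have hF0 : F 0 = 0 := by
      rw [hF]; beta_reduce; rw [if_neg (by omega : ¬ a+1 ≤ 0)]
    have hFn : F n = 0 := by
      rw [hF]
      beta_reduce
      by_cases h : a + 1 ≤ n
      · rw [if_pos h, hg n b (Or.inl le_rfl), mul_zero]
      · rw [if_neg h]
    rw [Finset.sum_range_succ F n, hFn, add_zero, hF0, add_zero] at h2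
    rw [← h2]
  have hy : ∑ i ∈ Finset.range n,
      (if a ≤ i then ((p-1-b).choose (i-a) : ℂ) * g i (b+1) else 0)
      = phiW n p g a (b+1) + phiW n p g (a+1) (b+1) := by
    by_cases hbp : b + 1 < p
    · rw [phiW, phiW, ← Finset.sum_add_distrib]
      apply Finset.sum_congr rfl
      intro i _
      by_cases hai1 : a + 1 ≤ i
      · rw [if_pos (by omega), if_pos (by omega), if_pos hai1]
        have hpas : (p-1-b).choose (i-a)
            = (p-1-(b+1)).choose (i-a) + (p-1-(b+1)).choose (i-(a+1)) := by
          have h1 : p-1-b = (p-1-(b+1)) + 1 := by omega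
          have h2 : i - a = (i - (a+1)) + 1 := by omega
          rw [h1, h2, Nat.choose_succ_succ]
          exact add_comm _ _
        rw [hpas]
        push_cast
        ring
      · by_cases hai : a ≤ i
        · have hia : i = a := by omega
          subst hia
          rw [if_pos le_rfl, if_pos le_rfl, if_neg hai1, Nat.sub_self,
            Nat.choose_zero_right, Nat.choose_zero_right, add_zero]
        · rw [if_neg hai, if_neg hai, if_neg (by omega), add_zero]
    · have hzero : ∀ i, g i (b+1) = 0 := fun i => hg i (b+1) (Or.inr (by omega))
      have t1 : ∑ i ∈ Finset.range n,
          (if a ≤ i then ((p-1-b).choose (i-a) : ℂ) * g i (b+1) else 0) = 0 := by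
        apply Finset.sum_eq_zero
        intro i _
        split_ifs
        · rw [hzero, mul_zero]
        · rfl
      have t2 : phiW n p g a (b+1) = 0 := by
        apply Finset.sum_eq_zero
        intro i _
        split_ifs
        · rw [hzero, mul_zero]
        · rfl
      have t3 : phiW n p g (a+1) (b+1) = 0 := by
        apply Finset.sum_eq_zero
        intro i _
        split_ifs
        · rw [hzero, mul_zero]
        · rfl
      rw [t1, t2, t3, add_zero]
  rw [hRHS, hx, hy]
  ring

/-! ### block-diagonal entries and chain shifts -/

lemma Lst_eq (n p : ℕ) (hn : 1 ≤ n) (hp : 1 ≤ p) (σ : Idx n p) :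
    Lst n p σ.1 = n + p - 1 - 2 * tops n p σ := by
  have := σ.1.2
  unfold Lst tops
  omega

lemma BD_entry (n p : ℕ) (σ σ' : Idx n p) :
    Matrix.blockDiagonal' (fun t : Fin (min n p) => jordanBlock (Lst n p t)) σ σ'
      = if σ.1 = σ'.1 then
          (if (σ'.2:ℕ) = (σ.2:ℕ) then (1:ℂ)
            else if (σ'.2:ℕ) = (σ.2:ℕ)+1 then 1 else 0)
        else 0 := by
  obtain ⟨t1, i1⟩ := σ
  obtain ⟨t2, i2⟩ := σ'
  rw [Matrix.blockDiagonal'_apply]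
  by_cases h : t1 = t2
  · subst h
    rw [dif_pos rfl, if_pos rfl]
    show jordanBlock _ i1 (cast _ i2) = _
    rw [show (cast (by rfl) i2 : Fin (Lst n p t1)) = i2 from rfl]
    rfl
  · rw [dif_neg h, if_neg h]

lemma chain_shift_pos (n p : ℕ) (hn : 1 ≤ n) (hp : 1 ≤ p) (σ : Idx n p)
    (h : 1 ≤ (σ.2 : ℕ)) :
    Eo (chainW n p σ)
      = chainW n p ⟨σ.1, ⟨(σ.2:ℕ)-1, by omega⟩⟩ := by
  unfold chainW
  rw [← Module.End.mul_apply, ← pow_succ']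
  have h2 := σ.2.2
  have hk : kexp n p (⟨σ.1, ⟨(σ.2:ℕ)-1, by omega⟩⟩ : Idx n p) = kexp n p σ + 1 := by
    unfold kexp
    simp only
    omega
  have ht : tops n p (⟨σ.1, ⟨(σ.2:ℕ)-1, by omega⟩⟩ : Idx n p) = tops n p σ := rfl
  rw [hk, ht]

lemma chain_shift_zero (n p : ℕ) (hn : 1 ≤ n) (hp : 1 ≤ p) (σ : Idx n p)
    (h : (σ.2 : ℕ) = 0) :
    Eo (chainW n p σ) = 0 := by
  unfold chainW
  rw [← Module.End.mul_apply, ← pow_succ']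
  have h2 := σ.2.2
  have hk : kexp n p σ + 1 = n + p - 1 - 2 * tops n p σ := by
    have := Lst_eq n p hn hp σ
    unfold kexp at *
    omega
  rw [hk]
  exact Ekill n p (tops n p σ) hn hp (tops_lt n p hn hp σ)

end

end JBP

/-- Plethysm for unipotent Jordan blocks: `J_n ⊗ J_p` is similar to the
block-diagonal matrix with blocks `J_s`,
`s ∈ {n+p-1, n+p-3, …, |n-p|+3, |n-p|+1}` (the block sizes
`|n-p| + 1 + 2t`, `t = 0, …, min n p - 1`, sum to `np`, as witnessed by the
bijection of index types). -/
theorem jordan_block_kronecker_plethysm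
    (n p : ℕ) (hn : 1 ≤ n) (hp : 1 ≤ p) :
    ∃ e : (Fin n × Fin p) ≃
        (Σ t : Fin (min n p), Fin (max n p - min n p + 1 + 2 * (t : ℕ))),
      ∃ T : Matrix (Fin n × Fin p) (Fin n × Fin p) ℂ,
        IsUnit T.det ∧
        (jordanBlock n) ⊗ₖ (jordanBlock p) =
          T * (Matrix.reindex e.symm e.symm
            (Matrix.blockDiagonal'
              (fun t : Fin (min n p) =>
                jordanBlock (max n p - min n p + 1 + 2 * (t : ℕ))))) * T⁻¹ := by
  classical
  -- cardinalities match
  have hmm : min n p * max n p = n * p := by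
    rcases le_total n p with h | h
    · rw [min_eq_left h, max_eq_right h]
    · rw [min_eq_right h, max_eq_left h, mul_comm]
  have hsum : ∑ i ∈ Finset.range (min n p), (max n p - min n p + 1 + 2*i)
      = min n p * max n p := by
    obtain ⟨Dd, hDd⟩ := Nat.exists_eq_add_of_le (min_le_max : min n p ≤ max n p)
    obtain ⟨m', hm'⟩ : ∃ m', min n p = m' + 1 := ⟨min n p - 1, by omega⟩
    rw [hDd, hm']
    rw [show m' + 1 + Dd - (m'+1) + 1 = Dd + 1 from by omega]
    have hga : (∑ i ∈ Finset.range (m'+1), i) * 2 = (m'+1) * m' := by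
      rw [Finset.sum_range_id_mul_two (m'+1)]
      norm_num
    rw [Finset.sum_add_distrib, Finset.sum_const, Finset.card_range, smul_eq_mul,
      ← Finset.mul_sum]
    have h2 : 2 * (∑ i ∈ Finset.range (m'+1), i) = (m'+1) * m' := by
      rw [mul_comm]; exact hga
    rw [h2]
    ring
  have hcard : Fintype.card (Fin n × Fin p) = Fintype.card (JBP.Idx n p) := by
    rw [Fintype.card_prod, Fintype.card_fin, Fintype.card_fin, Fintype.card_sigma]
    simp only [Fintype.card_fin]
    rw [Fin.sum_univ_eq_sum_range (fun i => JBP.Lst n p i) (min n p)]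
    show n * p = ∑ i ∈ Finset.range (min n p), (max n p - min n p + 1 + 2*i)
    rw [hsum, hmm]
  set e : (Fin n × Fin p) ≃ JBP.Idx n p := Fintype.equivOfCardEq hcard with he
  set TE : Matrix (Fin n × Fin p) (Fin n × Fin p) ℂ :=
    (fun r c => JBP.chainW n p (e c) r.1 r.2) with hTE
  set T : Matrix (Fin n × Fin p) (Fin n × Fin p) ℂ := JBP.Tphi n p * TE with hT
  set D : Matrix (Fin n × Fin p) (Fin n × Fin p) ℂ :=
    Matrix.reindex e.symm e.symm
      (Matrix.blockDiagonal' (fun t : Fin (min n p) => jordanBlock (JBP.Lst n p t)))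
    with hD
  -- columns of T
  have hcolT : ∀ c r, T r c = JBP.phiW n p (JBP.chainW n p (e c)) r.1 r.2 := by
    intro c r
    have h1 : T r c = ((JBP.Tphi n p).mulVec (JBP.vecc n p (JBP.chainW n p (e c)))) r := by
      rw [hT, Matrix.mul_apply]
      rfl
    rw [h1, JBP.Tphi_mulVec n p _ (JBP.chain_box n p hn hp (e c))]
    rfl
  -- T is injective, hence invertible
  have hTinj : ∀ u : Fin n × Fin p → ℂ, T.mulVec u = 0 → u = 0 := by
    intro u hu
    rw [hT, ← Matrix.mulVec_mulVec] at hu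
    have h1 : TE.mulVec u = 0 := JBP.Tphi_inj n p _ hu
    have h2 : ∑ s : JBP.Idx n p, u (e.symm s) • JBP.chainW n p s = (0 : JBP.W) := by
      funext a b
      have heval : (∑ s : JBP.Idx n p, u (e.symm s) • JBP.chainW n p s) a b
          = ∑ s : JBP.Idx n p, u (e.symm s) * JBP.chainW n p s a b := by
        rw [Finset.sum_apply, Finset.sum_apply]
        rfl
      show (∑ s : JBP.Idx n p, u (e.symm s) • JBP.chainW n p s) a b = 0
      rw [heval]
      by_cases hbox : a < n ∧ b < p
      · have h3 : TE.mulVec u (⟨a, hbox.1⟩, ⟨b, hbox.2⟩) = 0 := by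
          rw [h1]; rfl
        have h4 : TE.mulVec u (⟨a, hbox.1⟩, ⟨b, hbox.2⟩)
            = ∑ k : Fin n × Fin p, JBP.chainW n p (e k) a b * u k := rfl
        have h5 : ∑ s : JBP.Idx n p, u (e.symm s) * JBP.chainW n p s a b
            = ∑ k : Fin n × Fin p, JBP.chainW n p (e k) a b * u k := by
          rw [← Equiv.sum_comp e.symm (fun k => JBP.chainW n p (e k) a b * u k)]
          apply Finset.sum_congr rfl
          intro s _
          rw [Equiv.apply_symm_apply]
          ring
        rw [h5, ← h4, h3]
      · apply Finset.sum_eq_zero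
        intro s _
        rw [JBP.chain_box n p hn hp s a b (by omega), mul_zero]
    have h3 := JBP.indep n p hn hp (fun s => u (e.symm s)) h2
    funext c
    have h4 : u (e.symm (e c)) = 0 := h3 (e c)
    rw [Equiv.symm_apply_apply] at h4
    simpa using h4
  have hdet : IsUnit T.det := by
    rw [isUnit_iff_ne_zero]
    intro hdet0
    obtain ⟨u, hu0, hu⟩ := Matrix.exists_mulVec_eq_zero_iff.mpr hdet0
    exact hu0 (hTinj u hu)
  -- the key similarity identity
  have hmain : (jordanBlock n ⊗ₖ jordanBlock p) * T = T * D := by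
    ext r c
    obtain ⟨i, j⟩ := r
    have hgbox := JBP.chain_box n p hn hp (e c)
    have hphibox := JBP.phiW_box n p _ hgbox
    have hL : ((jordanBlock n ⊗ₖ jordanBlock p) * T) (i,j) c
        = JBP.phiW n p (JBP.chainW n p (e c)) i j
          + JBP.phiW n p (JBP.chainW n p (e c)) ((i:ℕ)+1) j
          + JBP.phiW n p (JBP.chainW n p (e c)) i ((j:ℕ)+1)
          + JBP.phiW n p (JBP.chainW n p (e c)) ((i:ℕ)+1) ((j:ℕ)+1) := by
      rw [Matrix.mul_apply]
      have hstep : ∀ k, (jordanBlock n ⊗ₖ jordanBlock p) (i,j) k * T k c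
          = (jordanBlock n ⊗ₖ jordanBlock p) (i,j) k
            * JBP.vecc n p (JBP.phiW n p (JBP.chainW n p (e c))) k := by
        intro k
        rw [hcolT c k]
        rfl
      rw [Finset.sum_congr rfl (fun k _ => hstep k)]
      have hmv : ∑ k, (jordanBlock n ⊗ₖ jordanBlock p) (i,j) k
            * JBP.vecc n p (JBP.phiW n p (JBP.chainW n p (e c))) k
          = ((jordanBlock n ⊗ₖ jordanBlock p).mulVec
              (JBP.vecc n p (JBP.phiW n p (JBP.chainW n p (e c))))) (i,j) := rfl
      rw [hmv, JBP.A_mulVec n p _ hphibox]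
      show JBP.phiW n p (JBP.chainW n p (e c)) i j
          + JBP.phiW n p (JBP.chainW n p (e c)) ((i:ℕ)+1) j
          + JBP.phiW n p (JBP.chainW n p (e c)) i ((j:ℕ)+1)
          + JBP.phiW n p (JBP.chainW n p (e c)) ((i:ℕ)+1) ((j:ℕ)+1) = _
      rfl
    have hR : (T * D) (i,j) c
        = JBP.phiW n p (JBP.chainW n p (e c)) i j
          + JBP.phiW n p (JBP.Eo (JBP.chainW n p (e c))) i j := by
      rw [Matrix.mul_apply]
      have hDkc : ∀ k, D k c
          = (if (e k).1 = (e c).1 then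
              (if ((e c).2:ℕ) = ((e k).2:ℕ) then (1:ℂ)
               else if ((e c).2:ℕ) = ((e k).2:ℕ)+1 then 1 else 0) else 0) := by
        intro k
        rw [hD, Matrix.reindex_apply]
        simp only [Equiv.symm_symm]
        exact JBP.BD_entry n p (e k) (e c)
      rw [Finset.sum_congr rfl (fun k _ => by rw [hDkc k])]
      have hsum2 : ∑ k : Fin n × Fin p, T (i,j) k *
          (if (e k).1 = (e c).1 then
            (if ((e c).2:ℕ) = ((e k).2:ℕ) then (1:ℂ)
             else if ((e c).2:ℕ) = ((e k).2:ℕ)+1 then 1 else 0) else 0)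
        = ∑ s : JBP.Idx n p, T (i,j) (e.symm s) *
          (if s.1 = (e c).1 then
            (if ((e c).2:ℕ) = (s.2:ℕ) then (1:ℂ)
             else if ((e c).2:ℕ) = (s.2:ℕ)+1 then 1 else 0) else 0) := by
        rw [← Equiv.sum_comp e.symm (fun k => T (i,j) k *
          (if (e k).1 = (e c).1 then
            (if ((e c).2:ℕ) = ((e k).2:ℕ) then (1:ℂ)
             else if ((e c).2:ℕ) = ((e k).2:ℕ)+1 then 1 else 0) else 0))]
        apply Finset.sum_congr rfl
        intro s _
        have hs : e (e.symm s) = s := e.apply_symm_apply s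
        rw [hs]
      rw [hsum2]
      have hj2 := ((e c).2).2
      by_cases hj0pos : 1 ≤ ((e c).2 : ℕ)
      · -- two surviving terms
        have hb1 : ((e c).2:ℕ) - 1 < JBP.Lst n p ((e c).1) := by omega
        have hneq : (e c) ≠ (⟨(e c).1, ⟨((e c).2:ℕ)-1, hb1⟩⟩ : JBP.Idx n p) := by
          intro hc
          have := congrArg (fun s : JBP.Idx n p => (s.2 : ℕ)) hc
          simp only at this
          omega
        have hkey : ∀ s : JBP.Idx n p,
            T (i,j) (e.symm s) * (if s.1 = (e c).1 then
              (if ((e c).2:ℕ) = (s.2:ℕ) then (1:ℂ)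
               else if ((e c).2:ℕ) = (s.2:ℕ)+1 then 1 else 0) else 0)
            = (if s = e c then T (i,j) c else 0)
              + (if s = (⟨(e c).1, ⟨((e c).2:ℕ)-1, hb1⟩⟩ : JBP.Idx n p)
                  then T (i,j) (e.symm (⟨(e c).1, ⟨((e c).2:ℕ)-1, hb1⟩⟩ : JBP.Idx n p))
                  else 0) := by
          intro s
          by_cases h1 : s = e c
          · subst h1
            rw [if_pos rfl, if_pos rfl, if_pos rfl, if_neg hneq,
              Equiv.symm_apply_apply, mul_one, add_zero]
          · by_cases h2 : s = (⟨(e c).1, ⟨((e c).2:ℕ)-1, hb1⟩⟩ : JBP.Idx n p)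
            · subst h2
              rw [if_pos rfl, if_neg (by simp only; omega), if_pos (by simp only; omega),
                if_neg h1, if_pos rfl, mul_one, zero_add]
            · rw [if_neg h1, if_neg h2, add_zero]
              by_cases h3 : s.1 = (e c).1
              · have hs2a : ¬ (((e c).2:ℕ) = (s.2:ℕ)) := by
                  intro hc
                  apply h1
                  obtain ⟨ts, is⟩ := s
                  simp only at h3 hc
                  subst h3
                  have his : is = (e c).2 := Fin.ext hc.symm
                  rw [his]
                have hs2b : ¬ (((e c).2:ℕ) = (s.2:ℕ)+1) := by
                  intro hc
                  apply h2
                  obtain ⟨ts, is⟩ := s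
                  simp only at h3 hc
                  subst h3
                  have his : is = (⟨((e c).2:ℕ)-1, hb1⟩ : Fin _) := Fin.ext (by simp only; omega)
                  rw [his]
                rw [if_pos h3, if_neg hs2a, if_neg hs2b, mul_zero]
              · rw [if_neg h3, mul_zero]
        rw [Finset.sum_congr rfl (fun s _ => hkey s), Finset.sum_add_distrib,
          Finset.sum_ite_eq' Finset.univ (e c) (fun _ => T (i,j) c),
          Finset.sum_ite_eq' Finset.univ
            (⟨(e c).1, ⟨((e c).2:ℕ)-1, hb1⟩⟩ : JBP.Idx n p)
            (fun _ => T (i,j) (e.symm (⟨(e c).1, ⟨((e c).2:ℕ)-1, hb1⟩⟩ : JBP.Idx n p))),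
          if_pos (Finset.mem_univ _), if_pos (Finset.mem_univ _)]
        rw [hcolT c (i,j), hcolT (e.symm (⟨(e c).1, ⟨((e c).2:ℕ)-1, hb1⟩⟩ : JBP.Idx n p)) (i,j),
          Equiv.apply_symm_apply]
        have hshift := JBP.chain_shift_pos n p hn hp (e c) hj0pos
        rw [hshift]
      · -- only one surviving term
        have hkey : ∀ s : JBP.Idx n p,
            T (i,j) (e.symm s) * (if s.1 = (e c).1 then
              (if ((e c).2:ℕ) = (s.2:ℕ) then (1:ℂ)
               else if ((e c).2:ℕ) = (s.2:ℕ)+1 then 1 else 0) else 0)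
            = (if s = e c then T (i,j) c else 0) := by
          intro s
          by_cases h1 : s = e c
          · subst h1
            rw [if_pos rfl, if_pos rfl, if_pos rfl, Equiv.symm_apply_apply, mul_one]
          · rw [if_neg h1]
            by_cases h3 : s.1 = (e c).1
            · have hs2a : ¬ (((e c).2:ℕ) = (s.2:ℕ)) := by
                intro hc
                apply h1
                obtain ⟨ts, is⟩ := s
                simp only at h3 hc
                subst h3
                have his : is = (e c).2 := Fin.ext hc.symm
                rw [his]
              have hs2b : ¬ (((e c).2:ℕ) = (s.2:ℕ)+1) := by omega
              rw [if_pos h3, if_neg hs2a, if_neg hs2b, mul_zero]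
            · rw [if_neg h3, mul_zero]
        rw [Finset.sum_congr rfl (fun s _ => hkey s),
          Finset.sum_ite_eq' Finset.univ (e c) (fun _ => T (i,j) c),
          if_pos (Finset.mem_univ _)]
        rw [hcolT c (i,j)]
        rw [JBP.chain_shift_zero n p hn hp (e c) (by omega), JBP.phiW_zero]
        show _ = _ + (0 : JBP.W) (i:ℕ) (j:ℕ)
        norm_num
    rw [hL, hR]
    have hintw := JBP.intertwine n p (JBP.chainW n p (e c)) hgbox i j i.2 j.2
    linear_combination hintw
  refine ⟨e, T, hdet, ?_⟩
  have hfinal : T * D * T⁻¹ = jordanBlock n ⊗ₖ jordanBlock p := by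
    rw [← hmain, Matrix.mul_assoc, Matrix.mul_nonsing_inv T hdet, Matrix.mul_one]
  rw [hD] at hfinal
  exact hfinal.symm
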